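/- arXiv:2211.06640 — 6 statements merged into one kernel-verified Lean document; each statement's English description precedes it below -/
import Mathlib

section
/- Any Lie subalgebra of a regular finite-dimensional Lie algebra over an infinite field is regular. -/
/-!
For `x ∈ S`, `ad x` preserves `S`, so its characteristic polynomial on `L` is the product of the
characteristic polynomials of `ad_S x` and of the endomorphism it induces on `L ⧸ S`. Over an
infinite field some element of `S` is generic for both factors at once, so the rank of `L` viewed
as an `S`-module is the sum of the ranks of the two factors; since each trailing degree is
bounded below by the corresponding rank, an element of `S` that is regular on `L` (as an
`S`-module) is regular on both factors, in particular on `S`. Finally, a regular element of `L`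
lying in `S` is regular on `L` as an `S`-module, because restricting the family `ad` to `S` can
only raise its generic trailing degree.
-/

open Polynomial

namespace LinearMap

section charpoly

variable {R V : Type*} [CommRing R] [AddCommGroup V] [Module R V] [Module.Free R V]
  [Module.Finite R V] (W : Submodule R V) [Module.Free R W] [Module.Finite R W]
  [Module.Free R (V ⧸ W)]

open Module.Basis in
theorem charpoly_eq_charpoly_restrict_mul_charpoly_mapQ (e : V →ₗ[R] V) (he : W ≤ W.comap e) :
    e.charpoly = (e.restrict he).charpoly * (W.mapQ W e he).charpoly := by
  let bW := Module.Free.chooseBasis R W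
  let bQ := Module.Free.chooseBasis R (V ⧸ W)
  let b := sumQuot bW bQ
  obtain ⟨B, hB⟩ : ∃ B, toMatrix b b e = Matrix.fromBlocks (toMatrix bW bW (e.restrict he)) B 0
      (toMatrix bQ bQ (W.mapQ W e he)) := by
    refine ⟨(toMatrix b b e).toBlocks₁₂, ?_⟩
    ext (i | i) (j | j)
    · simp only [b, sumQuot_inl, Matrix.fromBlocks_apply₁₁, toMatrix_apply]
      apply sumQuot_repr_inl_of_mem
    · rfl
    · suffices W.mkQ (e (bW j)) = 0 by simp [toMatrix_apply, b, this]
      rw [← LinearMap.mem_ker, Submodule.ker_mkQ]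
      exact he (bW j).2
    · simp only [toMatrix_apply, sumQuot_repr_inr, Matrix.fromBlocks_apply₂₂, b]
      rw [← sumQuot_inr bW bQ j, W.mapQ_apply]
      simp
  rw [← charpoly_toMatrix e b, hB, Matrix.charpoly_fromBlocks_zero₂₁, charpoly_toMatrix,
    charpoly_toMatrix]

end charpoly

section nilRegular

variable {R L L' M M₁ M₂ : Type*} [CommRing R] [IsDomain R] [Infinite R]
  [AddCommGroup L] [Module R L] [Module.Finite R L] [Module.Free R L]
  [AddCommGroup M] [Module R M] [Module.Finite R M] [Module.Free R M]
  [AddCommGroup M₁] [Module R M₁] [Module.Finite R M₁] [Module.Free R M₁]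
  [AddCommGroup M₂] [Module R M₂] [Module.Finite R M₂] [Module.Free R M₂]
  [AddCommGroup L'] [Module R L'] [Module.Finite R L'] [Module.Free R L']

theorem exists_isNilRegular_and_isNilRegular (φ₁ : L →ₗ[R] Module.End R M₁)
    (φ₂ : L →ₗ[R] Module.End R M₂) : ∃ x, IsNilRegular φ₁ x ∧ IsNilRegular φ₂ x := by
  let b := Module.Free.chooseBasis R L
  have hprod : (polyCharpoly φ₁ b).coeff (nilRank φ₁) * (polyCharpoly φ₂ b).coeff (nilRank φ₂)
      ≠ 0 := mul_ne_zero (polyCharpoly_coeff_nilRank_ne_zero φ₁ b)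
        (polyCharpoly_coeff_nilRank_ne_zero φ₂ b)
  obtain ⟨r, hr⟩ : ∃ r, MvPolynomial.eval r
      ((polyCharpoly φ₁ b).coeff (nilRank φ₁) * (polyCharpoly φ₂ b).coeff (nilRank φ₂)) ≠ 0 := by
    by_contra! h
    exact hprod (MvPolynomial.funext fun r ↦ by rw [h r, map_zero])
  rw [map_mul, mul_ne_zero_iff] at hr
  refine ⟨b.repr.symm (Finsupp.equivFunOnFinite.symm r), ?_, ?_⟩ <;>
    simp only [isNilRegular_iff_coeff_polyCharpoly_nilRank_ne_zero _ b,
      LinearEquiv.apply_symm_apply, Finsupp.coe_equivFunOnFinite_symm, hr.1, hr.2, ne_eq,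
      not_false_eq_true]

theorem nilRank_eq_add_of_charpoly_eq_mul (φ : L →ₗ[R] Module.End R M)
    (φ₁ : L →ₗ[R] Module.End R M₁) (φ₂ : L →ₗ[R] Module.End R M₂)
    (hφ : ∀ x, (φ x).charpoly = (φ₁ x).charpoly * (φ₂ x).charpoly) :
    nilRank φ = nilRank φ₁ + nilRank φ₂ := by
  have ntd_eq x : (φ x).charpoly.natTrailingDegree =
      (φ₁ x).charpoly.natTrailingDegree + (φ₂ x).charpoly.natTrailingDegree := by
    rw [hφ, natTrailingDegree_mul (charpoly_monic _).ne_zero (charpoly_monic _).ne_zero]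
  obtain ⟨x, hx⟩ := exists_isNilRegular φ
  obtain ⟨y, hy₁, hy₂⟩ := exists_isNilRegular_and_isNilRegular φ₁ φ₂
  rw [isNilRegular_iff_natTrailingDegree_charpoly_eq_nilRank] at hx hy₁ hy₂
  -- `x`, generic for `φ`, gives `≥`; `y`, generic for `φ₁` and `φ₂`, gives `≤`.
  have := nilRank_le_natTrailingDegree_charpoly φ y
  have := nilRank_le_natTrailingDegree_charpoly φ₁ x
  have := nilRank_le_natTrailingDegree_charpoly φ₂ x
  have := ntd_eq x
  have := ntd_eq y
  omega

theorem IsNilRegular.left_of_charpoly_eq_mul {φ : L →ₗ[R] Module.End R M}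
    (φ₁ : L →ₗ[R] Module.End R M₁) (φ₂ : L →ₗ[R] Module.End R M₂)
    (hφ : ∀ x, (φ x).charpoly = (φ₁ x).charpoly * (φ₂ x).charpoly) {x : L}
    (hx : IsNilRegular φ x) : IsNilRegular φ₁ x := by
  rw [isNilRegular_iff_natTrailingDegree_charpoly_eq_nilRank] at hx ⊢
  rw [hφ, natTrailingDegree_mul (charpoly_monic _).ne_zero (charpoly_monic _).ne_zero,
    nilRank_eq_add_of_charpoly_eq_mul φ φ₁ φ₂ hφ] at hx
  have := nilRank_le_natTrailingDegree_charpoly φ₁ x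
  have := nilRank_le_natTrailingDegree_charpoly φ₂ x
  omega

theorem nilRank_le_nilRank_comp (φ : L →ₗ[R] Module.End R M) (g : L' →ₗ[R] L) :
    nilRank φ ≤ nilRank (φ ∘ₗ g) := by
  obtain ⟨y, hy⟩ := exists_isNilRegular (φ ∘ₗ g)
  rw [isNilRegular_iff_natTrailingDegree_charpoly_eq_nilRank] at hy
  exact hy ▸ nilRank_le_natTrailingDegree_charpoly φ (g y)

theorem IsNilRegular.comp {φ : L →ₗ[R] Module.End R M} (g : L' →ₗ[R] L) {x : L'}
    (hx : IsNilRegular φ (g x)) : IsNilRegular (φ ∘ₗ g) x := by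
  rw [isNilRegular_iff_natTrailingDegree_charpoly_eq_nilRank] at hx ⊢
  exact le_antisymm (hx ▸ nilRank_le_nilRank_comp φ g)
    (nilRank_le_natTrailingDegree_charpoly (φ ∘ₗ g) x)

end nilRegular

end LinearMap

namespace LieModule

variable {K L M : Type*} [Field K] [LieRing L] [LieAlgebra K L] [AddCommGroup M] [Module K M]
  [LieRingModule L M] [LieModule K L M] [Module.Finite K M]

theorem charpoly_toEnd_eq_mul (N : LieSubmodule K L M) (x : L) :
    (toEnd K L M x).charpoly = (toEnd K L N x).charpoly * (toEnd K L (M ⧸ N) x).charpoly :=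
  (toEnd K L M x).charpoly_eq_charpoly_restrict_mul_charpoly_mapQ N.toSubmodule
    fun _ hm ↦ N.lie_mem hm

theorem IsRegular.lieSubmodule [Infinite K] [Module.Finite K L] {x : L} (hx : IsRegular K M x)
    (N : LieSubmodule K L M) : IsRegular K N x :=
  LinearMap.IsNilRegular.left_of_charpoly_eq_mul _ _ (charpoly_toEnd_eq_mul N) hx

end LieModule

/-- Any Lie subalgebra of a regular finite-dimensional Lie algebra over an infinite field
is regular. -/
theorem lieSubalgebra_of_regular_isRegular
    (K L : Type*) [Field K] [Infinite K] [LieRing L] [LieAlgebra K L]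
    [Module.Finite K L]
    (hreg : ∀ x : L, x ≠ 0 → LieAlgebra.IsRegular K x)
    (S : LieSubalgebra K L) :
    ∀ x : S, x ≠ 0 → LieAlgebra.IsRegular K x := by
  intro x hx
  -- `toEnd K S L` is `ad K L ∘ₗ S.subtype` and `toEnd K S S.toLieSubmodule` is `ad K S`,
  -- both definitionally.
  have hxL : LieModule.IsRegular K L x :=
    (hreg x (by simpa using hx)).comp S.toSubmodule.subtype
  exact hxL.lieSubmodule S.toLieSubmodule
end

section
/- If I is a nonzero proper ideal of a finite-dimensional regular Lie algebra L over an infinite field, then the quotient L/I is a nilpotent Lie algebra. -/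
/-!
The characteristic polynomial of `ad x` factors through the ideal `I` and the quotient `L ⧸ I`,
so trailing degrees add. Evaluating at an element regular for both `I` and `L ⧸ I` (one exists
since `K` is infinite) gives `rank L ≤ rank_L I + rank_L (L ⧸ I)`. A nonzero `y ∈ I` is regular
and acts by zero on `L ⧸ I`, so `rank L ≥ rank_L I + dim (L ⧸ I)`. Hence
`rank_L (L ⧸ I) = dim (L ⧸ I)`: every `x` acts nilpotently on `L ⧸ I`, and Engel's theorem
concludes.
-/

open Polynomial Module LinearMap

attribute [local instance] LieRing.ofAssociativeRing

theorem LinearMap.charpoly_eq_charpoly_restrict_mul_charpoly_mapQ_s2 {R V : Type*} [CommRing R]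
    [AddCommGroup V] [Module R V] [Module.Free R V] [Module.Finite R V] {W : Submodule R V}
    [Module.Free R W] [Module.Finite R W] [Module.Free R (V ⧸ W)] [Module.Finite R (V ⧸ W)]
    (e : V →ₗ[R] V) (he : W ≤ W.comap e) :
    e.charpoly = (e.restrict he).charpoly * (W.mapQ W e he).charpoly := by
  classical
  let bW := Module.Free.chooseBasis R W
  let bQ := Module.Free.chooseBasis R (V ⧸ W)
  let b := bW.sumQuot bQ
  have hblock : toMatrix b b e = Matrix.fromBlocks (toMatrix bW bW (e.restrict he))
      (toMatrix b b e).toBlocks₁₂ 0 (toMatrix bQ bQ (W.mapQ W e he)) := by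
    ext (i | i) (j | j)
    · simp only [b, Module.Basis.sumQuot_inl, Matrix.fromBlocks_apply₁₁, toMatrix_apply]
      apply Module.Basis.sumQuot_repr_inl_of_mem
    · rfl
    · suffices W.mkQ (e (bW j)) = 0 by simp [toMatrix_apply, b, this]
      rw [← LinearMap.mem_ker, Submodule.ker_mkQ]
      exact he (bW j).2
    · simp only [toMatrix_apply, Module.Basis.sumQuot_repr_inr, Matrix.fromBlocks_apply₂₂, b]
      rw [← Module.Basis.sumQuot_inr bW bQ j, W.mapQ_apply]
      simp
  rw [← e.charpoly_toMatrix b, hblock, Matrix.charpoly_fromBlocks_zero₂₁, charpoly_toMatrix,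
    charpoly_toMatrix]

namespace LieModule

lemma exists_isRegular_and_isRegular (R L M N : Type*) [CommRing R] [IsDomain R]
    [Infinite R] [LieRing L] [LieAlgebra R L] [Module.Finite R L] [Module.Free R L]
    [AddCommGroup M] [Module R M] [LieRingModule L M] [LieModule R L M]
    [Module.Finite R M] [Module.Free R M]
    [AddCommGroup N] [Module R N] [LieRingModule L N] [LieModule R L N]
    [Module.Finite R N] [Module.Free R N] :
    ∃ x : L, IsRegular R M x ∧ IsRegular R N x := by
  classical
  let b := Module.Free.chooseBasis R L
  set P := (polyCharpoly (toEnd R L M).toLinearMap b).coeff (rank R L M)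
  set Q := (polyCharpoly (toEnd R L N).toLinearMap b).coeff (rank R L N)
  have hPQ : P * Q ≠ 0 := mul_ne_zero (polyCharpoly_coeff_rank_ne_zero R L M b)
    (polyCharpoly_coeff_rank_ne_zero R L N b)
  obtain ⟨v, hv⟩ : ∃ v, MvPolynomial.eval v (P * Q) ≠ 0 := by
    by_contra! h
    exact hPQ (MvPolynomial.funext fun v => by simp [h v])
  rw [map_mul] at hv
  refine ⟨b.repr.symm (Finsupp.equivFunOnFinite.symm v), ?_, ?_⟩ <;>
    rw [isRegular_iff_coeff_polyCharpoly_rank_ne_zero R _ b, LinearEquiv.apply_symm_apply]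
  exacts [left_ne_zero_of_mul hv, right_ne_zero_of_mul hv]

lemma isNilpotent_toEnd_of_rank_eq_finrank {K L M : Type*} [Field K] [LieRing L]
    [LieAlgebra K L] [Module.Finite K L] [AddCommGroup M] [Module K M] [LieRingModule L M]
    [LieModule K L M] [Module.Finite K M] (h : rank K L M = finrank K M) (x : L) :
    _root_.IsNilpotent (toEnd K L M x) := by
  refine ((charpoly_nilpotent_tfae (toEnd K L M x)).out 3 0).mp (le_antisymm ?_ ?_)
  · exact (natTrailingDegree_le_natDegree _).trans (charpoly_natDegree _).le
  · exact h ▸ rank_le_natTrailingDegree_charpoly_ad K M x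

end LieModule

namespace LieIdeal

open LieModule

variable {K L : Type*} [Field K] [LieRing L] [LieAlgebra K L] (I : LieIdeal K L)

lemma toEnd_quotient_eq_zero {y : L} (hy : y ∈ I) : toEnd K L (L ⧸ I) y = 0 := by
  ext ⟨z⟩
  exact LieSubmodule.Quotient.mk_eq_zero'.mpr (lie_mem_left K L I y z hy)

variable [Module.Finite K L]

lemma natTrailingDegree_charpoly_ad (x : L) :
    (LieAlgebra.ad K L x).charpoly.natTrailingDegree =
      (toEnd K L I x).charpoly.natTrailingDegree +
        (toEnd K L (L ⧸ I) x).charpoly.natTrailingDegree := by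
  rw [← natTrailingDegree_mul (charpoly_monic _).ne_zero (charpoly_monic _).ne_zero]
  congr 1
  exact LinearMap.charpoly_eq_charpoly_restrict_mul_charpoly_mapQ_s2 (W := I.toSubmodule) _
    fun _ hy => I.lie_mem hy

lemma rank_le_rank_add_rank [Infinite K] :
    LieAlgebra.rank K L ≤ rank K L I + rank K L (L ⧸ I) := by
  obtain ⟨x, hI, hQ⟩ := exists_isRegular_and_isRegular K L I (L ⧸ I)
  rw [isRegular_iff_natTrailingDegree_charpoly_eq_rank] at hI hQ
  calc LieAlgebra.rank K L ≤ (LieAlgebra.ad K L x).charpoly.natTrailingDegree :=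
        LieAlgebra.rank_le_natTrailingDegree_charpoly_ad K x
    _ = _ := by rw [natTrailingDegree_charpoly_ad, hI, hQ]

lemma rank_add_finrank_le_of_isRegular {y : L} (hy : y ∈ I) (hreg : LieAlgebra.IsRegular K y) :
    rank K L I + finrank K (L ⧸ I) ≤ LieAlgebra.rank K L := by
  rw [LieAlgebra.isRegular_iff_natTrailingDegree_charpoly_eq_rank] at hreg
  rw [← hreg, natTrailingDegree_charpoly_ad, toEnd_quotient_eq_zero I hy, charpoly_zero,
    natTrailingDegree_X_pow]
  exact Nat.add_le_add_right (rank_le_natTrailingDegree_charpoly_ad K I y) _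

end LieIdeal

theorem quotient_by_nontrivial_ideal_of_regular_isNilpotent_general
    (K L : Type*) [Field K] [Infinite K] [LieRing L] [LieAlgebra K L]
    [Module.Finite K L]
    (hreg : ∀ x : L, x ≠ 0 → LieAlgebra.IsRegular K x)
    (I : LieIdeal K L) (hbot : I ≠ ⊥) :
    LieRing.IsNilpotent (L ⧸ I) := by
  obtain ⟨y, hyI, hy0⟩ : ∃ y ∈ I, y ≠ 0 := by simpa [LieSubmodule.eq_bot_iff] using hbot
  have hrank : LieModule.rank K L (L ⧸ I) = finrank K (L ⧸ I) :=
    le_antisymm (LieModule.rank_le_finrank K L (L ⧸ I)) <| by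
      have hupper := I.rank_le_rank_add_rank
      have hlower := I.rank_add_finrank_le_of_isRegular hyI (hreg y hy0)
      omega
  rw [LieAlgebra.isNilpotent_iff_forall (R := K)]
  rintro ⟨x⟩
  exact LieModule.isNilpotent_toEnd_of_rank_eq_finrank hrank x

/-- If `I` is a nonzero proper ideal of a finite-dimensional regular Lie algebra over an
infinite field, then `L ⧸ I` is a nilpotent Lie algebra. -/
theorem quotient_by_nontrivial_ideal_of_regular_isNilpotent
    (K L : Type*) [Field K] [Infinite K] [LieRing L] [LieAlgebra K L]
    [Module.Finite K L]
    (hreg : ∀ x : L, x ≠ 0 → LieAlgebra.IsRegular K x)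
    (I : LieIdeal K L) (hbot : I ≠ ⊥) (htop : I ≠ ⊤) :
    LieRing.IsNilpotent (L ⧸ I) :=
  quotient_by_nontrivial_ideal_of_regular_isNilpotent_general K L hreg I hbot
end

section
/- A finite-dimensional regular Lie algebra over an infinite field that is not semisimple (i.e., has a nonzero solvable radical) is nilpotent. -/
/-!
The bottom term of the derived series of a nonzero solvable radical is a nonzero abelian ideal, and
any `x` in it satisfies `(ad x)² = 0`. A regular nilpotent element forces `rank L = dim L`; since
the trailing degree of the characteristic polynomial of every `ad y` lies between `rank L` and
`dim L`, every `ad y` has characteristic polynomial `X ^ dim L`, and Engel's theorem applies.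
-/

open Module Polynomial

namespace LieIdeal

variable {R L : Type*} [CommRing R] [LieRing L] [LieAlgebra R L]

lemma lie_lie_eq_zero_of_mem_of_isLieAbelian {I : LieIdeal R L} [IsLieAbelian I] {x : L}
    (hx : x ∈ I) (y : L) : ⁅x, ⁅x, y⁆⁆ = 0 := by
  have hI : ⁅I, I⁆ = ⊥ := (LieSubmodule.lie_abelian_iff_lie_self_eq_bot I).mp inferInstance
  have hmem : ⁅x, ⁅x, y⁆⁆ ∈ ⁅I, I⁆ := LieSubmodule.lie_mem_lie hx (lie_mem_left R L I x y hx)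
  rwa [hI, LieSubmodule.mem_bot] at hmem

lemma isNilpotent_ad_of_mem_of_isLieAbelian {I : LieIdeal R L} [IsLieAbelian I] {x : L}
    (hx : x ∈ I) : IsNilpotent (LieAlgebra.ad R L x) :=
  ⟨2, LinearMap.ext fun y => by
    simp [pow_two, lie_lie_eq_zero_of_mem_of_isLieAbelian hx y]⟩

end LieIdeal

namespace LieAlgebra

lemma exists_ne_zero_isNilpotent_ad_of_radical_ne_bot {R L : Type*} [CommRing R] [LieRing L]
    [LieAlgebra R L] [IsNoetherian R L] (h : radical R L ≠ ⊥) :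
    ∃ x : L, x ≠ 0 ∧ IsNilpotent (ad R L x) := by
  have hA : derivedAbelianOfIdeal (radical R L) ≠ ⊥ :=
    fun h' => h ((abelian_of_solvable_ideal_eq_bot_iff _).mp h')
  obtain ⟨x, hx, hx0⟩ : ∃ x ∈ derivedAbelianOfIdeal (radical R L), x ≠ 0 := by
    simpa only [ne_eq, LieSubmodule.eq_bot_iff, not_forall, exists_prop] using hA
  have := abelian_derivedAbelianOfIdeal (radical R L)
  exact ⟨x, hx0, LieIdeal.isNilpotent_ad_of_mem_of_isLieAbelian hx⟩

variable {K L : Type*} [Field K] [LieRing L] [LieAlgebra K L] [Module.Finite K L]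

lemma rank_eq_finrank_of_isRegular_of_isNilpotent_ad {x : L} (hreg : IsRegular K x)
    (hnil : IsNilpotent (ad K L x)) : rank K L = finrank K L := by
  have h := (isRegular_iff_natTrailingDegree_charpoly_eq_rank K x).mp hreg
  rwa [hnil.charpoly_eq_X_pow_finrank, natTrailingDegree_X_pow, eq_comm] at h

lemma isNilpotent_ad_of_rank_eq_finrank (h : rank K L = finrank K L) (y : L) :
    IsNilpotent (ad K L y) := by
  have hle : (ad K L y).charpoly.natTrailingDegree ≤ finrank K L :=
    (ad K L y).charpoly_natDegree ▸ natTrailingDegree_le_natDegree _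
  exact ((LinearMap.charpoly_nilpotent_tfae (ad K L y)).out 3 0).mp
    (le_antisymm hle (h ▸ rank_le_natTrailingDegree_charpoly_ad K y))

end LieAlgebra

theorem regular_not_semisimple_isNilpotent_general
    (K L : Type*) [Field K] [LieRing L] [LieAlgebra K L]
    [Module.Finite K L]
    (hreg : ∀ x : L, x ≠ 0 → LieAlgebra.IsRegular K x)
    (hrad : LieAlgebra.radical K L ≠ ⊥) :
    LieRing.IsNilpotent L := by
  obtain ⟨x, hx0, hnil⟩ := LieAlgebra.exists_ne_zero_isNilpotent_ad_of_radical_ne_bot hrad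
  have hrank := LieAlgebra.rank_eq_finrank_of_isRegular_of_isNilpotent_ad (hreg x hx0) hnil
  exact (LieAlgebra.isNilpotent_iff_forall (R := K)).mpr
    (LieAlgebra.isNilpotent_ad_of_rank_eq_finrank hrank)

/-- A finite-dimensional regular Lie algebra over an infinite field that is not semisimple
(i.e. has a nonzero solvable radical) is nilpotent. -/
theorem regular_not_semisimple_isNilpotent
    (K L : Type*) [Field K] [Infinite K] [LieRing L] [LieAlgebra K L]
    [Module.Finite K L]
    (hreg : ∀ x : L, x ≠ 0 → LieAlgebra.IsRegular K x)
    (hrad : LieAlgebra.radical K L ≠ ⊥) :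
    LieRing.IsNilpotent L :=
  regular_not_semisimple_isNilpotent_general K L hreg hrad
end

section
/- In a simple finite-dimensional regular Lie algebra of rank 1 possessing a nondegenerate symmetric invariant bilinear form, every element is a commutator: for every x ∈ L there exist y, z ∈ L with x = [y, z]. -/
/-!
If `y ≠ 0` is regular in a rank-one Lie algebra, then `ker (ad y) = K y`, so `[L, y]` has
codimension one. Invariance gives `B y [y, z] = B [y, y] z = 0`, hence `[L, y]` lies in the
hyperplane `ker (B y)` and, by dimension count, equals it. Every `x` is therefore a commutator
`[y, z]` as soon as `y ≠ 0` is chosen with `B y x = 0`, which is possible once `dim L ≥ 2`.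
-/

open Module

namespace LieAlgebra

variable {K L : Type*} [Field K] [LieRing L] [LieAlgebra K L] [Module.Finite K L]

lemma isLieAbelian_of_finrank_le_one (h : finrank K L ≤ 1) : IsLieAbelian L := by
  obtain ⟨v, hv⟩ := finrank_le_one_iff.mp h
  refine ⟨fun a b => ?_⟩
  obtain ⟨c, rfl⟩ := hv a
  obtain ⟨d, rfl⟩ := hv b
  simp

lemma two_le_finrank_of_not_isLieAbelian (h : ¬IsLieAbelian L) : 2 ≤ finrank K L := by
  by_contra! hlt
  exact h (isLieAbelian_of_finrank_le_one (K := K) (Nat.le_of_lt_succ hlt))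

lemma finrank_ker_ad_eq_one_of_isRegular (hrk : rank K L = 1) {y : L}
    (hy : IsRegular K y) (hy0 : y ≠ 0) : finrank K (LinearMap.ker (ad K L y)) = 1 := by
  have hengel : finrank K (LieSubalgebra.engel K y).toSubmodule = 1 :=
    hrk ▸ (isRegular_iff_finrank_engel_eq_rank K y).mp hy
  have hker_le : LinearMap.ker (ad K L y) ≤ (LieSubalgebra.engel K y).toSubmodule :=
    fun z hz => (LieSubalgebra.mem_engel_iff K y z).mpr ⟨1, by simpa using hz⟩
  have hpos : 1 ≤ finrank K (LinearMap.ker (ad K L y)) :=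
    Submodule.one_le_finrank_iff.mpr <| (Submodule.ne_bot_iff _).mpr ⟨y, by simp, hy0⟩
  have hle := Submodule.finrank_mono hker_le
  omega

lemma range_ad_eq_ker_of_finrank_ker_ad_eq_one (B : LinearMap.BilinForm K L)
    (hinv : ∀ x y z : L, B ⁅x, y⁆ z = B x ⁅y, z⁆) {y : L} (hBy : B y ≠ 0)
    (hker : finrank K (LinearMap.ker (ad K L y)) = 1) :
    LinearMap.range (ad K L y) = LinearMap.ker (B y) := by
  have hle : LinearMap.range (ad K L y) ≤ LinearMap.ker (B y) := by
    rintro _ ⟨z, rfl⟩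
    simp [← hinv]
  refine Submodule.eq_of_le_of_finrank_le hle ?_
  have hrank := LinearMap.finrank_range_add_finrank_ker (ad K L y)
  have hcorank := Dual.finrank_ker_add_one_of_ne_zero hBy
  omega

end LieAlgebra

lemma LinearMap.exists_mem_ker_ne_zero {K V : Type*} [Field K] [AddCommGroup V]
    [Module K V] [FiniteDimensional K V] (hV : 2 ≤ finrank K V) (f : V →ₗ[K] K) :
    ∃ y ∈ ker f, y ≠ 0 :=
  Submodule.exists_mem_ne_zero_of_ne_bot <| f.ker_ne_bot_of_finrank_lt <| by
    rw [finrank_self]; omega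

theorem simple_regular_rank_one_every_element_is_commutator_general
    (K L : Type*) [Field K] [LieRing L] [LieAlgebra K L]
    [Module.Finite K L] [LieAlgebra.IsSimple K L]
    (hrk : LieAlgebra.rank K L = 1)
    (hreg : ∀ x : L, x ≠ 0 → LieAlgebra.IsRegular K x)
    (B : LinearMap.BilinForm K L)
    (hinv : ∀ x y z : L, B ⁅x, y⁆ z = B x ⁅y, z⁆)
    (hnd : B.Nondegenerate) :
    ∀ x : L, ∃ y z : L, x = ⁅y, z⁆ := by
  intro x
  have hdim : 2 ≤ finrank K L :=
    LieAlgebra.two_le_finrank_of_not_isLieAbelian (LieAlgebra.IsSimple.non_abelian K)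
  obtain ⟨y, hyx, hy0⟩ := (B.flip x).exists_mem_ker_ne_zero hdim
  have hBy : B y ≠ 0 := fun h => hy0 (hnd.1 y (by simp [h]))
  have hrange := LieAlgebra.range_ad_eq_ker_of_finrank_ker_ad_eq_one B hinv hBy
    (LieAlgebra.finrank_ker_ad_eq_one_of_isRegular hrk (hreg y hy0) hy0)
  have hx : x ∈ LinearMap.ker (B y) := hyx
  obtain ⟨z, hz⟩ : x ∈ LinearMap.range (LieAlgebra.ad K L y) := hrange ▸ hx
  exact ⟨y, z, hz.symm⟩

/-- In a simple finite-dimensional regular Lie algebra of rank 1, possessing a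
nondegenerate symmetric invariant bilinear form, every element is a commutator. -/
theorem simple_regular_rank_one_every_element_is_commutator
    (K L : Type*) [Field K] [Infinite K] [LieRing L] [LieAlgebra K L]
    [Module.Finite K L] [LieAlgebra.IsSimple K L]
    (hrk : LieAlgebra.rank K L = 1)
    (hreg : ∀ x : L, x ≠ 0 → LieAlgebra.IsRegular K x)
    (B : LinearMap.BilinForm K L) (hsymm : B.IsSymm)
    (hinv : ∀ x y z : L, B ⁅x, y⁆ z = B x ⁅y, z⁆)
    (hnd : B.Nondegenerate) :
    ∀ x : L, ∃ y z : L, x = ⁅y, z⁆ :=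
  simple_regular_rank_one_every_element_is_commutator_general K L hrk hreg B hinv hnd
end

section
/- Let L be a finite-dimensional Lie algebra over a field. If c ∈ L satisfies (ad c)^2 = 0 and C_L(c) is abelian, then for every n the iterated bracket [ ... [c, L], ..., L] (n times) is contained in C_L(c); consequently the ideal of L generated by c lies in C_L(c). -/
/-- If `c` is an absolute zero divisor (`(ad c)^2 = 0`) with abelian centralizer, then the
ideal of `L` generated by `c` is contained in the centralizer of `c`. -/
theorem ideal_generated_by_azd_le_centralizer
    (K L : Type*) [Field K] [LieRing L] [LieAlgebra K L] [Module.Finite K L]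
    (c : L) (hazd : (LieAlgebra.ad K L c) ^ 2 = 0)
    (habel : ∀ y z : L, ⁅y, c⁆ = 0 → ⁅z, c⁆ = 0 → ⁅y, z⁆ = 0) :
    ∀ y ∈ (LieSubmodule.lieSpan K L ({c} : Set L) : LieSubmodule K L L),
      ⁅y, c⁆ = 0 := by
  have hsq : ∀ x : L, ⁅c, ⁅c, x⁆⁆ = 0 := by
    intro x
    have := congrFun (congrArg (fun f => f.toFun) hazd) x
    simpa [pow_two, LieAlgebra.ad_apply] using this
  have hxc : ∀ x : L, ⁅⁅x, c⁆, c⁆ = 0 := by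
    intro x
    have h := hsq x
    have h2 : ⁅x, c⁆ = -⁅c, x⁆ := (lie_skew x c).symm
    rw [h2, neg_lie, neg_eq_zero, ← lie_skew, h, neg_zero]
  let N : LieSubmodule K L L :=
    { carrier := {y | ⁅y, c⁆ = 0}
      add_mem' := by intro a b ha hb; simp only [Set.mem_setOf_eq] at *; rw [add_lie, ha, hb, add_zero]
      zero_mem' := by simp
      smul_mem' := by intro t a ha; simp only [Set.mem_setOf_eq] at *; rw [smul_lie, ha, smul_zero]
      lie_mem := by
        intro x m hm
        simp only [Set.mem_setOf_eq] at *
        have leib : ⁅x, ⁅m, c⁆⁆ = ⁅⁅x, m⁆, c⁆ + ⁅m, ⁅x, c⁆⁆ := leibniz_lie x m c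
        rw [hm, lie_zero] at leib
        have h2 : ⁅m, ⁅x, c⁆⁆ = 0 := habel m ⁅x, c⁆ hm (hxc x)
        rw [h2, add_zero] at leib
        exact leib.symm }
  intro y hy
  have hle : LieSubmodule.lieSpan K L ({c} : Set L) ≤ N := by
    apply LieSubmodule.lieSpan_le.mpr
    intro z hz
    simp only [Set.mem_singleton_iff] at hz
    subst hz
    exact lie_self _
  exact hle hy
end

section
/- Let L be a finite-dimensional Lie algebra, c ∈ L an absolute zero divisor ((ad c)^2 = 0), and H a Cartan subalgebra (self-normalizing nilpotent subalgebra) containing C_L(c), with Fitting decomposition L = H ⊕ L₁ with respect to H. Then assuming c ≠ 0 and C_L(c) ⊆ H one derives L = H, i.e., L is nilpotent. Equivalently: in a non-nilpotent Lie algebra, the centralizer of a nonzero absolute zero divisor is never contained in a Cartan subalgebra H with [L₁, c] forced into H. -/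
/-!
Since `(ad c)^2 = 0`, every bracket `⁅c, x⁆` centralizes `c`, so `⁅c, L⁆ ⊆ C_L(c) ⊆ H`. The
positive Fitting component `L₁` of `L` relative to `H` is `H`-stable, hence `⁅c, L₁⁆ ⊆ H ∩ L₁ = 0`.
Thus `L₁ ⊆ C_L(c) ⊆ H`, and the Fitting decomposition `L = H ⊕ L₁` collapses to `L = H`.
-/

lemma LieAlgebra.lie_lie_self_eq_zero_of_ad_sq_eq_zero {R L : Type*} [CommRing R] [LieRing L]
    [LieAlgebra R L] {c : L} (h : LieAlgebra.ad R L c ^ 2 = 0) (x : L) : ⁅⁅c, x⁆, c⁆ = 0 := by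
  have hcc : ⁅c, ⁅c, x⁆⁆ = 0 := by
    simpa only [pow_two, Module.End.mul_apply, LieAlgebra.ad_apply, LinearMap.zero_apply] using
      LinearMap.congr_fun h x
  rw [← lie_skew, hcc, neg_zero]

namespace LieModule

variable {R L M : Type*} [CommRing R] [LieRing L] [LieAlgebra R L] [LieRing.IsNilpotent L]
  [AddCommGroup M] [Module R M] [LieRingModule L M] [LieModule R L M]
  [IsNoetherian R M] [IsArtinian R M]

lemma lie_eq_zero_of_mem_posFittingComp {x : L} {m : M} (hm : m ∈ posFittingComp R L M)
    (hxm : ⁅x, m⁆ ∈ genWeightSpace M (0 : L → R)) : ⁅x, m⁆ = 0 :=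
  (isCompl_genWeightSpace_zero_posFittingComp R L M).disjoint.le_bot
    ⟨hxm, (posFittingComp R L M).lie_mem hm⟩

end LieModule

namespace LieSubalgebra

variable {R L : Type*} [CommRing R] [LieRing L] [LieAlgebra R L] [IsNoetherian R L]
  {H : LieSubalgebra R L} [H.IsCartanSubalgebra]

lemma genWeightSpace_zero_eq_toLieSubmodule :
    LieModule.genWeightSpace L (0 : H → R) = H.toLieSubmodule :=
  LieAlgebra.rootSpace_zero_eq R L H

variable [IsArtinian R L]

lemma lie_eq_zero_of_mem_posFittingComp {x m : L} (hx : x ∈ H)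
    (hm : m ∈ LieModule.posFittingComp R H L) (hxm : ⁅x, m⁆ ∈ H) : ⁅x, m⁆ = 0 := by
  have hxm' : ⁅(⟨x, hx⟩ : H), m⁆ ∈ LieModule.genWeightSpace L (0 : H → R) := by
    rwa [genWeightSpace_zero_eq_toLieSubmodule, coe_bracket_of_module, mem_toLieSubmodule]
  simpa only [coe_bracket_of_module] using LieModule.lie_eq_zero_of_mem_posFittingComp hm hxm'

lemma eq_top_of_posFittingComp_le (h : LieModule.posFittingComp R H L ≤ H.toLieSubmodule) :
    H = ⊤ := by
  have hfit := (LieModule.isCompl_genWeightSpace_zero_posFittingComp R H L).codisjoint.eq_top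
  rw [genWeightSpace_zero_eq_toLieSubmodule, sup_eq_left.mpr h] at hfit
  rw [← toSubmodule_eq_top, ← coe_toLieSubmodule, hfit, LieSubmodule.top_toSubmodule]

end LieSubalgebra

theorem azd_centralizer_in_cartan_implies_nilpotent_general
    (K L : Type*) [Field K] [LieRing L] [LieAlgebra K L] [Module.Finite K L]
    (H : LieSubalgebra K L) [H.IsCartanSubalgebra]
    (c : L) (hazd : (LieAlgebra.ad K L c) ^ 2 = 0)
    (hcent : ∀ y : L, ⁅y, c⁆ = 0 → y ∈ H) :
    H = ⊤ := by
  have hcH : c ∈ H := hcent c (lie_self c)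
  refine LieSubalgebra.eq_top_of_posFittingComp_le fun m hm ↦ hcent m ?_
  have hcm : ⁅c, m⁆ = 0 := LieSubalgebra.lie_eq_zero_of_mem_posFittingComp hcH hm
    (hcent _ (LieAlgebra.lie_lie_self_eq_zero_of_ad_sq_eq_zero hazd m))
  rw [← lie_skew, hcm, neg_zero]

/-- If `c` is a nonzero absolute zero divisor of a finite-dimensional Lie algebra `L` whose
centralizer is contained in a Cartan subalgebra `H`, then `L = H` (so `L` is nilpotent). -/
theorem azd_centralizer_in_cartan_implies_nilpotent
    (K L : Type*) [Field K] [LieRing L] [LieAlgebra K L] [Module.Finite K L]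
    (H : LieSubalgebra K L) [H.IsCartanSubalgebra]
    (c : L) (hc : c ≠ 0) (hazd : (LieAlgebra.ad K L c) ^ 2 = 0)
    (hcent : ∀ y : L, ⁅y, c⁆ = 0 → y ∈ H) :
    H = ⊤ :=
  azd_centralizer_in_cartan_implies_nilpotent_general K L H c hazd hcent
end
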